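/- In U_q(sl3), for all k ≥ 0 and i ∈ {1,2}, E_i^k F_i^k is congruent, modulo the left ideal U_q(sl3)·E_i, to (q^k (q^2;q^2)_k / (1-q^2)^{2k}) (q^{2-2k} K_i^2; q^2)_k K_i^{-k}, where (a;q^2)_k denotes the q-shifted factorial with K_i^2 substituted formally (i.e. the product ∏_{j=0}^{k-1}(1 - q^{2-2k+2j} K_i^2)). -/

import Mathlib

noncomputable section

/-- The defining relations of `U_q(sl3)` inside an `ℝ`-algebra `R`:
generators `E₁ E₂ F₁ F₂` and `K₁ K₂` with inverses `K₁' K₂'`. -/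
structure UqSL3 (R : Type*) [Ring R] [Algebra ℝ R] (q : ℝ)
    (E₁ E₂ F₁ F₂ K₁ K₁' K₂ K₂' : R) : Prop where
  K₁mul : K₁ * K₁' = 1
  K₁mul' : K₁' * K₁ = 1
  K₂mul : K₂ * K₂' = 1
  K₂mul' : K₂' * K₂ = 1
  Kcomm : K₁ * K₂ = K₂ * K₁
  Kcomm' : K₁ * K₂' = K₂' * K₁
  Kcomm'' : K₁' * K₂ = K₂ * K₁'
  KE11 : K₁ * E₁ = (q ^ (2:ℤ)) • (E₁ * K₁)
  KE12 : K₁ * E₂ = (q ^ (-1:ℤ)) • (E₂ * K₁)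
  KE21 : K₂ * E₁ = (q ^ (-1:ℤ)) • (E₁ * K₂)
  KE22 : K₂ * E₂ = (q ^ (2:ℤ)) • (E₂ * K₂)
  KF11 : K₁ * F₁ = (q ^ (-2:ℤ)) • (F₁ * K₁)
  KF12 : K₁ * F₂ = (q ^ (1:ℤ)) • (F₂ * K₁)
  KF21 : K₂ * F₁ = (q ^ (1:ℤ)) • (F₁ * K₂)
  KF22 : K₂ * F₂ = (q ^ (-2:ℤ)) • (F₂ * K₂)
  EF11 : E₁ * F₁ - F₁ * E₁ = (q - q⁻¹)⁻¹ • (K₁ - K₁')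
  EF22 : E₂ * F₂ - F₂ * E₂ = (q - q⁻¹)⁻¹ • (K₂ - K₂')
  EF12 : E₁ * F₂ = F₂ * E₁
  EF21 : E₂ * F₁ = F₁ * E₂
  serreE₁ : E₁ ^ 2 * E₂ - (q + q⁻¹) • (E₁ * E₂ * E₁) + E₂ * E₁ ^ 2 = 0
  serreE₂ : E₂ ^ 2 * E₁ - (q + q⁻¹) • (E₂ * E₁ * E₂) + E₁ * E₂ ^ 2 = 0
  serreF₁ : F₁ ^ 2 * F₂ - (q + q⁻¹) • (F₁ * F₂ * F₁) + F₂ * F₁ ^ 2 = 0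
  serreF₂ : F₂ ^ 2 * F₁ - (q + q⁻¹) • (F₂ * F₁ * F₂) + F₁ * F₂ ^ 2 = 0

/-!
Moving `E` to the right through `F ^ (m + 1)` gives the commutator formula
`[E, F ^ (m + 1)] = (q - q⁻¹)⁻¹ F ^ m (a_m K - b_m K⁻¹)` with the geometric sums
`a_m = ∑_{i ≤ m} q ^ (-2i) = q ^ (-2m) b_m` and `b_m = ∑_{i ≤ m} q ^ (2i)`. Hence
`E ^ (k + 1) F ^ (k + 1) ≡ (q - q⁻¹)⁻¹ E ^ k F ^ k (a_k K - b_k K⁻¹)` modulo the left ideal `U E`,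
which is stable under right multiplication by `K ^ (± 1)` because `E K ^ (± 1)` is a scalar
multiple of `K ^ (± 1) E`. By induction on `k`, each step multiplies the scalar by
`-(q - q⁻¹)⁻¹ b_k = q (1 - q ^ (2k + 2)) / (1 - q²)²` and the Cartan part by `1 - q ^ (-2k) K²`.
-/

open Finset

section QuasiCommute

variable {S R : Type*} [CommRing S] [Ring R] [Algebra S R]

theorem mul_pow_succ_sub_pow_succ_mul {E F K K' : R} {c s t : S}
    (hKF : K * F = s • (F * K)) (hK'F : K' * F = t • (F * K'))
    (hEF : E * F - F * E = c • (K - K')) (m : ℕ) :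
    E * F ^ (m + 1) - F ^ (m + 1) * E
      = c • (F ^ m * ((∑ i ∈ range (m + 1), s ^ i) • K - (∑ i ∈ range (m + 1), t ^ i) • K')) := by
  induction m with
  | zero => simpa using hEF
  | succ m ih =>
    calc E * F ^ (m + 2) - F ^ (m + 2) * E
        = (E * F ^ (m + 1) - F ^ (m + 1) * E) * F + F ^ (m + 1) * (E * F - F * E) := by
          rw [pow_succ _ (m + 1)]; noncomm_ring
      _ = c • (F ^ m * ((∑ i ∈ range (m + 1), s ^ i) • (K * F)
            - (∑ i ∈ range (m + 1), t ^ i) • (K' * F))) + F ^ (m + 1) * (c • (K - K')) := by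
          rw [ih, hEF]; simp only [smul_mul_assoc, mul_assoc, sub_mul]
      _ = _ := by
          rw [hKF, hK'F, geom_sum_succ (n := m + 1), geom_sum_succ (n := m + 1)]
          simp only [smul_sub, smul_add, mul_sub, mul_add, mul_smul_comm, smul_smul, add_smul,
            one_smul, pow_succ, mul_assoc]
          module

theorem pow_mul_smul_sub_smul {K K' : R} (hKK' : K * K' = 1) (hK'K : K' * K = 1) (a b : S)
    (k : ℕ) :
    K' ^ k * (a • K - b • K') = (a • (K * K) - b • 1) * K' ^ (k + 1) := by
  have hK : K' ^ k * K = K * K * K' ^ (k + 1) := by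
    rw [pow_succ', mul_assoc, ← mul_assoc K K', hKK', one_mul,
      ((show Commute K K' from hKK'.trans hK'K.symm).pow_right k).eq]
  rw [mul_sub, sub_mul, mul_smul_comm, mul_smul_comm, smul_mul_assoc, smul_mul_assoc, hK, one_mul,
    ← pow_succ]

end QuasiCommute

theorem geom_sum_inv_eq_inv_pow_mul_geom_sum {𝕜 : Type*} [Field 𝕜] {x : 𝕜} (hx : x ≠ 0)
    (n : ℕ) :
    ∑ i ∈ range (n + 1), x⁻¹ ^ i = x⁻¹ ^ n * ∑ i ∈ range (n + 1), x ^ i := by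
  induction n with
  | zero => simp
  | succ n ih =>
    rw [geom_sum_succ, ih, geom_sum_succ' (n := n + 1), mul_add, ← mul_pow, inv_mul_cancel₀ hx,
      one_pow, pow_succ']
    ring

theorem mul_mem_span_singleton_of_mul_eq {R : Type*} [Ring R] {E x y z : R} (h : E * y = z * E)
    (hx : x ∈ Ideal.span {E}) : x * y ∈ Ideal.span {E} := by
  obtain ⟨a, rfl⟩ := Ideal.mem_span_singleton'.1 hx
  exact Ideal.mem_span_singleton'.2 ⟨a * z, by rw [mul_assoc, ← h, mul_assoc]⟩

section InverseScaling

variable {S R : Type*} [Field S] [Ring R] [Algebra S R] {K K' X : R} {c : S}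

theorem mul_eq_inv_smul_mul_of_mul_eq_smul (hc : c ≠ 0)
    (h : K * X = c • (X * K)) : X * K = c⁻¹ • (K * X) := by
  rw [h, smul_smul, inv_mul_cancel₀ hc, one_smul]

theorem inv_mul_eq_inv_smul_of_mul_eq_smul (hc : c ≠ 0) (hKK' : K * K' = 1)
    (hK'K : K' * K = 1) (h : K * X = c • (X * K)) : K' * X = c⁻¹ • (X * K') :=
  calc K' * X = K' * (X * K) * K' := by rw [mul_assoc, mul_assoc, hKK', mul_one]
    _ = K' * (c⁻¹ • (K * X)) * K' := by rw [mul_eq_inv_smul_mul_of_mul_eq_smul hc h]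
    _ = c⁻¹ • (X * K') := by rw [mul_smul_comm, smul_mul_assoc, ← mul_assoc, hK'K, one_mul]

end InverseScaling

section Pochhammer

variable {R : Type*} [Ring R] [Algebra ℝ R]

-- `(q ^ (2 - 2k) K²; q²)_k` as written in the statement, where `List.range k` gets coerced to a
-- list of integers (hence `bind_pure_comp` below).
def cartanPochhammer (q : ℝ) (K : R) (k : ℕ) : R :=
  ((List.range k).map (fun j => (1 : R) - q ^ (2 - 2 * (k:ℤ) + 2 * (j:ℤ)) • (K * K))).prod

def pochhammerCoeff (q : ℝ) (k : ℕ) : ℝ :=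
  q ^ (k:ℤ) * (∏ j ∈ Finset.range k, (1 - q ^ (2 + 2 * (j:ℤ)))) / (1 - q ^ 2) ^ (2 * k)

theorem cartanPochhammer_succ (q : ℝ) (K : R) (n : ℕ) :
    cartanPochhammer q K (n + 1) = (1 - q ^ (-2 * (n:ℤ)) • (K * K)) * cartanPochhammer q K n := by
  simp only [cartanPochhammer, bind_pure_comp, List.map_eq_map, List.map_map,
    List.range_succ_eq_map, List.map_cons, List.prod_cons]
  congr 1
  · congr 3
    push_cast
    ring
  · refine congrArg List.prod (List.map_congr_left fun j _ => ?_)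
    simp only [Function.comp_apply]
    congr 3
    push_cast
    ring

theorem commute_mul_self_cartanPochhammer (q : ℝ) (K : R) (n : ℕ) :
    Commute (K * K) (cartanPochhammer q K n) :=
  Commute.list_prod_right _ _ fun _ hy => by
    obtain ⟨j, -, rfl⟩ := List.mem_map.1 hy
    exact (Commute.one_right _).sub_right ((Commute.refl _).smul_right _)

theorem pochhammerCoeff_succ (q : ℝ) (n : ℕ) :
    pochhammerCoeff q (n + 1)
      = pochhammerCoeff q n * (q * (1 - q ^ (2 + 2 * (n:ℤ))) / (1 - q ^ 2) ^ 2) := by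
  simp only [pochhammerCoeff, prod_range_succ, zpow_natCast, mul_add_one, pow_add, pow_one]
  rw [div_mul_div_comm]
  ring

theorem neg_inv_sub_inv_mul_geom_sum {q : ℝ} (hq : q ≠ 0) (hq2 : q ^ 2 ≠ 1) (n : ℕ) :
    -(q - q⁻¹)⁻¹ * ∑ i ∈ range (n + 1), (q ^ 2) ^ i
      = q * (1 - q ^ (2 + 2 * (n:ℤ))) / (1 - q ^ 2) ^ 2 := by
  have h1 : 1 - q ^ 2 ≠ 0 := sub_ne_zero.2 hq2.symm
  have h2 : q ^ 2 - 1 ≠ 0 := sub_ne_zero.2 hq2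
  have hsub : q - q⁻¹ = (q ^ 2 - 1) / q := by field_simp
  have hpow : q ^ (2 + 2 * (n:ℤ)) = (q ^ 2) ^ (n + 1) := by
    rw [← pow_mul, ← zpow_natCast]
    push_cast
    ring_nf
  rw [geom_sum_eq hq2, hsub, hpow]
  field_simp
  ring

end Pochhammer

section UqSL2

variable {R : Type*} [Ring R] [Algebra ℝ R] {q : ℝ} {E F K K' : R}

theorem pochhammerCoeff_smul_cartanPochhammer_succ (hq : q ≠ 0) (hq2 : q ^ 2 ≠ 1)
    (hKK' : K * K' = 1) (hK'K : K' * K = 1) (k : ℕ) :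
    pochhammerCoeff q (k + 1) • (cartanPochhammer q K (k + 1) * K' ^ (k + 1))
      = (q - q⁻¹)⁻¹ • (pochhammerCoeff q k • (cartanPochhammer q K k * K' ^ k)
          * ((∑ i ∈ range (k + 1), (q ^ 2)⁻¹ ^ i) • K
            - (∑ i ∈ range (k + 1), (q ^ 2) ^ i) • K')) := by
  set b := ∑ i ∈ range (k + 1), (q ^ 2) ^ i
  have ha : ∑ i ∈ range (k + 1), (q ^ 2)⁻¹ ^ i = q ^ (-2 * (k:ℤ)) * b := by
    rw [geom_sum_inv_eq_inv_pow_mul_geom_sum (pow_ne_zero 2 hq), zpow_mul, zpow_natCast, zpow_neg,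
      zpow_ofNat]
  have hP : Commute (cartanPochhammer q K k) ((q ^ (-2 * (k:ℤ)) * b) • (K * K) - b • 1) :=
    (((commute_mul_self_cartanPochhammer q K k).smul_left _).sub_left
      ((Commute.one_left _).smul_left _)).symm
  rw [ha, smul_mul_assoc, mul_assoc, pow_mul_smul_sub_smul hKK' hK'K, ← mul_assoc,
    hP.eq, pochhammerCoeff_succ, ← neg_inv_sub_inv_mul_geom_sum hq hq2 k, cartanPochhammer_succ]
  simp only [sub_mul, one_mul, smul_mul_assoc, mul_assoc, smul_sub, smul_smul]
  module

theorem pow_mul_pow_sub_mem_span_singleton (hq : q ≠ 0) (hq2 : q ^ 2 ≠ 1) (hKK' : K * K' = 1)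
    (hK'K : K' * K = 1) (hKE : K * E = q ^ (2:ℤ) • (E * K)) (hKF : K * F = q ^ (-2:ℤ) • (F * K))
    (hEF : E * F - F * E = (q - q⁻¹)⁻¹ • (K - K')) (k : ℕ) :
    E ^ k * F ^ k - pochhammerCoeff q k • (cartanPochhammer q K k * K' ^ k) ∈ Ideal.span {E} := by
  have hc : q ^ (2:ℤ) ≠ 0 := zpow_ne_zero _ hq
  have hIK : ∀ x ∈ Ideal.span {E}, x * K ∈ Ideal.span {E} := fun _ =>
    mul_mem_span_singleton_of_mul_eq
      ((mul_eq_inv_smul_mul_of_mul_eq_smul hc hKE).trans (smul_mul_assoc _ _ _).symm)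
  have hIK' : ∀ x ∈ Ideal.span {E}, x * K' ∈ Ideal.span {E} := fun _ =>
    mul_mem_span_singleton_of_mul_eq ((mul_eq_inv_smul_mul_of_mul_eq_smul (inv_ne_zero hc)
      (inv_mul_eq_inv_smul_of_mul_eq_smul hc hKK' hK'K hKE)).trans (smul_mul_assoc _ _ _).symm)
  rw [zpow_neg, zpow_ofNat] at hKF
  have hK'F := inv_mul_eq_inv_smul_of_mul_eq_smul (inv_ne_zero (pow_ne_zero 2 hq)) hKK' hK'K hKF
  rw [inv_inv] at hK'F
  induction k with
  | zero => simp [cartanPochhammer, pochhammerCoeff]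
  | succ k ih =>
    set X := (∑ i ∈ range (k + 1), (q ^ 2)⁻¹ ^ i) • K - (∑ i ∈ range (k + 1), (q ^ 2) ^ i) • K'
    have hEF_succ : E ^ (k + 1) * F ^ (k + 1)
        = E ^ k * F ^ (k + 1) * E + (q - q⁻¹)⁻¹ • (E ^ k * F ^ k * X) := by
      rw [pow_succ E, mul_assoc, eq_add_of_sub_eq' (mul_pow_succ_sub_pow_succ_mul hKF hK'F hEF k),
        mul_add, mul_smul_comm, ← mul_assoc, ← mul_assoc]
    rw [hEF_succ, pochhammerCoeff_smul_cartanPochhammer_succ hq hq2 hKK' hK'K, add_sub_assoc,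
      ← smul_sub, ← sub_mul]
    refine add_mem (Ideal.mul_mem_left _ _ (Ideal.mem_span_singleton_self E))
      (Submodule.smul_of_tower_mem _ _ ?_)
    rw [mul_sub, mul_smul_comm, mul_smul_comm]
    exact sub_mem (Submodule.smul_of_tower_mem _ _ (hIK _ ih))
      (Submodule.smul_of_tower_mem _ _ (hIK' _ ih))

end UqSL2

theorem stmt {R : Type*} [Ring R] [Algebra ℝ R] (q : ℝ) (hq0 : 0 < q) (hq1 : q < 1)
    (E₁ E₂ F₁ F₂ K₁ K₁' K₂ K₂' : R)
    (h : UqSL3 R q E₁ E₂ F₁ F₂ K₁ K₁' K₂ K₂') (k : ℕ) :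
    (∃ u : R, E₁ ^ k * F₁ ^ k
      = (q ^ (k:ℤ) * (∏ j ∈ Finset.range k, (1 - q ^ (2 + 2 * (j:ℤ)))) / (1 - q ^ 2) ^ (2 * k)) •
          (((List.range k).map (fun j => (1 : R) - q ^ (2 - 2 * (k:ℤ) + 2 * (j:ℤ)) • (K₁ * K₁))).prod
            * K₁' ^ k)
        + u * E₁) ∧
    (∃ u : R, E₂ ^ k * F₂ ^ k
      = (q ^ (k:ℤ) * (∏ j ∈ Finset.range k, (1 - q ^ (2 + 2 * (j:ℤ)))) / (1 - q ^ 2) ^ (2 * k)) •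
          (((List.range k).map (fun j => (1 : R) - q ^ (2 - 2 * (k:ℤ) + 2 * (j:ℤ)) • (K₂ * K₂))).prod
            * K₂' ^ k)
        + u * E₂) := by
  have hq : q ≠ 0 := hq0.ne'
  have hq2 : q ^ 2 ≠ 1 := (pow_lt_one₀ hq0.le hq1 two_ne_zero).ne
  obtain ⟨u₁, hu₁⟩ := Ideal.mem_span_singleton'.1 <|
    pow_mul_pow_sub_mem_span_singleton hq hq2 h.K₁mul h.K₁mul' h.KE11 h.KF11 h.EF11 k
  obtain ⟨u₂, hu₂⟩ := Ideal.mem_span_singleton'.1 <|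
    pow_mul_pow_sub_mem_span_singleton hq hq2 h.K₂mul h.K₂mul' h.KE22 h.KF22 h.EF22 k
  exact ⟨⟨u₁, eq_add_of_sub_eq' hu₁.symm⟩, ⟨u₂, eq_add_of_sub_eq' hu₂.symm⟩⟩
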